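/- arXiv:1112.2640 — 8 statements merged into one kernel-verified Lean document; each statement's English description precedes it below -/
import Mathlib

section
/- For a probabilistic model with scores on [0,1], the expected loss of the score-uniform threshold choice method under a uniform distribution of cost proportions equals the mean absolute error: L = π₀ s̄₀ + π₁(1 − s̄₁), where s̄_k = ∫₀¹ s f_k(s) ds. -/
/-!
Integrating the loss over the uniform cost proportion `c` gives weight `∫ 2c = 1` to the
class-0 term and `∫ 2(1 - c) = 1` to the class-1 term, so the expected loss is
`π₀ ∫₀¹ (1 - F₀) + π₁ ∫₀¹ F₁`. By Fubini, `∫₀¹ F₁(t) dt = ∫₀¹ (1 - s) f₁(s) ds` and, since `f₀`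
has mass one, `∫₀¹ (1 - F₀(t)) dt = ∫₀¹ ∫ₜ¹ f₀ = ∫₀¹ s f₀(s) ds`.
-/

open MeasureTheory Set

section Primitive

variable {E : Type*} [NormedAddCommGroup E] [NormedSpace ℝ E] {f : ℝ → E} {a b : ℝ}

theorem intervalIntegrable_primitive (hf : IntervalIntegrable f volume a b) :
    IntervalIntegrable (fun t => ∫ s in a..t, f s) volume a b :=
  (intervalIntegral.continuousOn_primitive_interval' hf left_mem_uIcc).intervalIntegrable

theorem integral_tail_eq_sub_primitive (hf : IntervalIntegrable f volume a b) {t : ℝ}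
    (ht : t ∈ uIcc a b) : ∫ s in t..b, f s = (∫ s in a..b, f s) - ∫ s in a..t, f s :=
  (intervalIntegral.integral_interval_sub_left hf (hf.mono_set (uIcc_subset_uIcc_left ht))).symm

variable [CompleteSpace E]

theorem integral_primitive_eq_integral_smul (hab : a ≤ b) (hf : IntervalIntegrable f volume a b) :
    ∫ t in a..b, ∫ s in a..t, f s = ∫ s in a..b, (b - s) • f s := by
  have hF : IntegrableOn (Function.uncurry fun t s => {x | x ≤ t}.indicator f s)
      (uIoc a b ×ˢ uIoc a b) := by
    rw [uIoc_of_le hab, IntegrableOn, Measure.volume_eq_prod, ← Measure.prod_restrict]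
    have huncurry : (Function.uncurry fun t s => {x | x ≤ t}.indicator f s) =
        {p : ℝ × ℝ | p.2 ≤ p.1}.indicator (fun p => f p.2) := by
      funext ⟨t, s⟩
      simp [indicator_apply]
    rw [huncurry]
    exact (hf.1.comp_snd _).indicator (measurableSet_le measurable_snd measurable_fst)
  calc ∫ t in a..b, ∫ s in a..t, f s
      = ∫ t in a..b, ∫ s in a..b, {x | x ≤ t}.indicator f s :=
        intervalIntegral.integral_congr fun t ht =>
          (intervalIntegral.integral_indicator (by rwa [uIcc_of_le hab] at ht)).symm
    _ = ∫ s in a..b, ∫ t in a..b, {x | x ≤ t}.indicator f s :=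
        intervalIntegral_intervalIntegral_swap hF
    _ = ∫ s in a..b, (b - s) • f s := by
        refine intervalIntegral.integral_congr_ae (Filter.Eventually.of_forall fun s hs => ?_)
        rw [uIoc_of_le hab] at hs
        have hind : ∀ t, {x | x ≤ t}.indicator f s = (Ici s).indicator (fun _ => f s) t := by
          intro t
          simp [indicator_apply]
        have hIcc : Ici s ∩ Ioc a b = Icc s b := by
          ext t
          simp only [mem_inter_iff, mem_Ici, mem_Ioc, mem_Icc]
          constructor
          · rintro ⟨hst, -, htb⟩
            exact ⟨hst, htb⟩
          · rintro ⟨hst, htb⟩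
            exact ⟨hst, hs.1.trans_le hst, htb⟩
        rw [funext hind, intervalIntegral.integral_of_le hab, integral_indicator measurableSet_Ici,
          setIntegral_const, measureReal_restrict_apply measurableSet_Ici, hIcc,
          Real.volume_real_Icc_of_le hs.2]

theorem integral_tail_eq_integral_smul (hab : a ≤ b) (hf : IntervalIntegrable f volume a b) :
    ∫ t in a..b, ∫ s in t..b, f s = ∫ s in a..b, (s - a) • f s := by
  calc ∫ t in a..b, ∫ s in t..b, f s
      = ∫ t in a..b, ((∫ s in a..b, f s) - ∫ s in a..t, f s) :=
        intervalIntegral.integral_congr fun t ht => integral_tail_eq_sub_primitive hf ht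
    _ = (b - a) • (∫ s in a..b, f s) - ∫ s in a..b, (b - s) • f s := by
        rw [intervalIntegral.integral_sub intervalIntegrable_const
            (intervalIntegrable_primitive hf), intervalIntegral.integral_const,
          integral_primitive_eq_integral_smul hab hf]
    _ = ∫ s in a..b, ((b - a) • f s - (b - s) • f s) := by
        rw [intervalIntegral.integral_sub (hf.continuousOn_smul continuousOn_const)
            (hf.continuousOn_smul (by fun_prop)),
          intervalIntegral.integral_smul]
    _ = ∫ s in a..b, (s - a) • f s := by
        simp_rw [← sub_smul, sub_sub_sub_cancel_left]

end Primitive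

theorem integral_integral_cost_mixture (p q : ℝ) {G H : ℝ → ℝ}
    (hG : IntervalIntegrable G volume 0 1) (hH : IntervalIntegrable H volume 0 1) :
    ∫ c in (0:ℝ)..1, ∫ t in (0:ℝ)..1, 2 * (c * p * G t + (1 - c) * q * H t) =
      p * (∫ t in (0:ℝ)..1, G t) + q * ∫ t in (0:ℝ)..1, H t := by
  have hinner : ∀ c : ℝ, ∫ t in (0:ℝ)..1, 2 * (c * p * G t + (1 - c) * q * H t) =
      c * (2 * (p * (∫ t in (0:ℝ)..1, G t) - q * ∫ t in (0:ℝ)..1, H t)) +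
        2 * q * ∫ t in (0:ℝ)..1, H t := by
    intro c
    rw [intervalIntegral.integral_const_mul, intervalIntegral.integral_add
      (hG.const_mul _) (hH.const_mul _), intervalIntegral.integral_const_mul,
      intervalIntegral.integral_const_mul]
    ring
  rw [intervalIntegral.integral_congr fun c _ => hinner c,
    intervalIntegral.integral_add (intervalIntegral.intervalIntegrable_id.mul_const _)
      intervalIntegrable_const, intervalIntegral.integral_mul_const, integral_id,
    intervalIntegral.integral_const, smul_eq_mul]
  ring

theorem score_uniform_expected_loss_eq_MAE_general
    (π0 π1 : ℝ)
    (f0 f1 F0 F1 : ℝ → ℝ)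
    (hf0int : IntervalIntegrable f0 volume 0 1)
    (hf1int : IntervalIntegrable f1 volume 0 1)
    (hf0norm : (∫ s in (0:ℝ)..1, f0 s) = 1)
    (hF0 : ∀ t, F0 t = ∫ s in (0:ℝ)..t, f0 s)
    (hF1 : ∀ t, F1 t = ∫ s in (0:ℝ)..t, f1 s) :
    (∫ c in (0:ℝ)..1, ∫ t in (0:ℝ)..1,
        2 * (c * π0 * (1 - F0 t) + (1 - c) * π1 * F1 t))
      = π0 * (∫ s in (0:ℝ)..1, s * f0 s) + π1 * (∫ s in (0:ℝ)..1, (1 - s) * f1 s) := by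
  rw [funext hF0, funext hF1]
  have hsurvival : ∀ t ∈ uIcc (0:ℝ) 1, 1 - ∫ s in (0:ℝ)..t, f0 s = ∫ s in t..1, f0 s :=
    fun t ht => by rw [integral_tail_eq_sub_primitive hf0int ht, hf0norm]
  rw [integral_integral_cost_mixture π0 π1
      (intervalIntegrable_const.sub (intervalIntegrable_primitive hf0int))
      (intervalIntegrable_primitive hf1int),
    intervalIntegral.integral_congr hsurvival,
    integral_tail_eq_integral_smul zero_le_one hf0int,
    integral_primitive_eq_integral_smul zero_le_one hf1int]
  simp only [sub_zero, smul_eq_mul]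

/-- Score-uniform threshold choice: expected loss under uniform cost proportions equals MAE. -/
theorem score_uniform_expected_loss_eq_MAE
    (π0 π1 : ℝ) (hπ0 : 0 ≤ π0) (hπ1 : 0 ≤ π1) (hπ : π0 + π1 = 1)
    (f0 f1 F0 F1 : ℝ → ℝ)
    (hf0 : ∀ s, 0 ≤ f0 s) (hf1 : ∀ s, 0 ≤ f1 s)
    (hf0int : IntervalIntegrable f0 volume 0 1)
    (hf1int : IntervalIntegrable f1 volume 0 1)
    (hf0norm : (∫ s in (0:ℝ)..1, f0 s) = 1)
    (hf1norm : (∫ s in (0:ℝ)..1, f1 s) = 1)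
    (hF0 : ∀ t, F0 t = ∫ s in (0:ℝ)..t, f0 s)
    (hF1 : ∀ t, F1 t = ∫ s in (0:ℝ)..t, f1 s) :
    (∫ c in (0:ℝ)..1, ∫ t in (0:ℝ)..1,
        2 * (c * π0 * (1 - F0 t) + (1 - c) * π1 * F1 t))
      = π0 * (∫ s in (0:ℝ)..1, s * f0 s) + π1 * (∫ s in (0:ℝ)..1, (1 - s) * f1 s) :=
  score_uniform_expected_loss_eq_MAE_general π0 π1 f0 f1 F0 F1 hf0int hf1int hf0norm hF0 hF1
end

section
/- For a probabilistic model with scores on [0,1], the expected loss of the score-driven threshold choice method (threshold T(c) = c) under a uniform distribution of cost proportions equals the Brier score: ∫₀¹ 2{c π₀ (1−F₀(c)) + (1−c) π₁ F₁(c)} dc = π₀ ∫₀¹ s² f₀(s) ds + π₁ ∫₀¹ (1−s)² f₁(s) ds. -/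
/-!
Both class terms are integrations by parts against a primitive of the density, which is
absolutely continuous: `2c (1 - F₀ c) = (F₀ c - 1) · (-c²)'` and
`2 (1 - c) F₁ c = F₁ c · (-(1 - c)²)'`. Each boundary term vanishes at one end through the
primitive (`F₀ 1 = 1`, `F₁ 0 = 0`) and at the other through the polynomial factor.
-/

open MeasureTheory Set

theorem IntervalIntegrable.integral_primitive_mul_deriv {f g : ℝ → ℝ} {a b c : ℝ}
    (hf : IntervalIntegrable f volume a b) (hc : c ∈ uIcc a b)
    (hg : AbsolutelyContinuousOnInterval g a b) :
    ∫ x in a..b, (∫ t in c..x, f t) * deriv g x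
      = (∫ t in c..b, f t) * g b - (∫ t in c..a, f t) * g a - ∫ x in a..b, f x * g x := by
  rw [(hf.absolutelyContinuousOnInterval_intervalIntegral hc).integral_mul_deriv_eq_deriv_mul hg]
  congr 1
  refine intervalIntegral.integral_congr_ae ?_
  filter_upwards [hf.ae_hasDerivAt_integral] with x hx hxab
  rw [(hx (uIoc_subset_uIcc hxab) c hc).deriv]

theorem score_driven_expected_loss_eq_brier_general
    (π0 π1 : ℝ)
    (f0 f1 F0 F1 : ℝ → ℝ)
    (hF0 : ∀ t, F0 t = ∫ s in (0:ℝ)..t, f0 s)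
    (hF1 : ∀ t, F1 t = ∫ s in (0:ℝ)..t, f1 s)
    (hf0int : IntervalIntegrable f0 volume 0 1)
    (hf1int : IntervalIntegrable f1 volume 0 1)
    (hF01 : F0 1 = 1) :
    (∫ c in (0:ℝ)..1, 2 * (c * π0 * (1 - F0 c) + (1 - c) * π1 * F1 c))
      = π0 * (∫ s in (0:ℝ)..1, s ^ 2 * f0 s) + π1 * (∫ s in (0:ℝ)..1, (1 - s) ^ 2 * f1 s) := by
  set g0 : ℝ → ℝ := fun x => -x ^ 2
  set g1 : ℝ → ℝ := fun x => -(1 - x) ^ 2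
  have hg0 : ∀ x, deriv g0 x = -(2 * x) := fun x => by
    rw [(hasDerivAt_pow 2 x).fun_neg.deriv]; ring
  have hg1 : ∀ x, deriv g1 x = 2 * (1 - x) := fun x => by
    rw [(((hasDerivAt_id' x).const_sub 1).fun_pow 2).fun_neg.deriv]; ring
  have hg0ac : AbsolutelyContinuousOnInterval g0 0 1 :=
    ContDiffOn.absolutelyContinuousOnInterval (by fun_prop)
  have hg1ac : AbsolutelyContinuousOnInterval g1 0 1 :=
    ContDiffOn.absolutelyContinuousOnInterval (by fun_prop)
  have hF0ac := hf0int.absolutelyContinuousOnInterval_intervalIntegral (right_mem_uIcc (a := 0))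
  have hF1ac := hf1int.absolutelyContinuousOnInterval_intervalIntegral (left_mem_uIcc (b := 1))
  have hF0_sub_one : ∀ c ∈ uIcc (0:ℝ) 1, F0 c - 1 = ∫ s in (1:ℝ)..c, f0 s := fun c hc => by
    have := intervalIntegral.integral_interval_sub_left
      (hf0int.mono_set (uIcc_subset_uIcc left_mem_uIcc hc)) hf0int
    linarith [hF0 1, hF0 c]
  calc (∫ c in (0:ℝ)..1, 2 * (c * π0 * (1 - F0 c) + (1 - c) * π1 * F1 c))
      = ∫ c in (0:ℝ)..1, π0 * ((∫ s in (1:ℝ)..c, f0 s) * deriv g0 c)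
          + π1 * ((∫ s in (0:ℝ)..c, f1 s) * deriv g1 c) := by
        refine intervalIntegral.integral_congr fun c hc => ?_
        simp only [hg0, hg1, ← hF0_sub_one c hc, hF1]
        ring
    _ = π0 * (∫ c in (0:ℝ)..1, (∫ s in (1:ℝ)..c, f0 s) * deriv g0 c)
          + π1 * ∫ c in (0:ℝ)..1, (∫ s in (0:ℝ)..c, f1 s) * deriv g1 c := by
        rw [intervalIntegral.integral_add, intervalIntegral.integral_const_mul,
          intervalIntegral.integral_const_mul]
        · exact (hg0ac.intervalIntegrable_deriv.continuousOn_mul hF0ac.continuousOn).const_mul π0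
        · exact (hg1ac.intervalIntegrable_deriv.continuousOn_mul hF1ac.continuousOn).const_mul π1
    _ = π0 * (∫ s in (0:ℝ)..1, s ^ 2 * f0 s) + π1 * (∫ s in (0:ℝ)..1, (1 - s) ^ 2 * f1 s) := by
        rw [hf0int.integral_primitive_mul_deriv right_mem_uIcc hg0ac,
          hf1int.integral_primitive_mul_deriv left_mem_uIcc hg1ac]
        simp [g0, g1, mul_comm]

/-- Score-driven threshold choice: expected loss under uniform cost proportions equals
    the Brier score. -/
theorem score_driven_expected_loss_eq_brier
    (π0 π1 : ℝ) (hπ0 : 0 ≤ π0) (hπ1 : 0 ≤ π1) (hπ : π0 + π1 = 1)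
    (f0 f1 F0 F1 : ℝ → ℝ)
    (hf0 : ∀ s, 0 ≤ f0 s) (hf1 : ∀ s, 0 ≤ f1 s)
    (hF0 : ∀ t, F0 t = ∫ s in (0:ℝ)..t, f0 s)
    (hF1 : ∀ t, F1 t = ∫ s in (0:ℝ)..t, f1 s)
    (hf0int : IntervalIntegrable f0 volume 0 1)
    (hf1int : IntervalIntegrable f1 volume 0 1)
    (hF00 : F0 0 = 0) (hF10 : F1 0 = 0) (hF01 : F0 1 = 1) (hF11 : F1 1 = 1) :
    (∫ c in (0:ℝ)..1, 2 * (c * π0 * (1 - F0 c) + (1 - c) * π1 * F1 c))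
      = π0 * (∫ s in (0:ℝ)..1, s ^ 2 * f0 s) + π1 * (∫ s in (0:ℝ)..1, (1 - s) ^ 2 * f1 s) :=
  score_driven_expected_loss_eq_brier_general π0 π1 f0 f1 F0 F1 hF0 hF1 hf0int hf1int hF01
end

section
/- Under the rate-uniform threshold choice method, the expected loss for a uniform distribution over rates and uniform cost proportions equals π₀π₁(1 − 2·AUC) + 1/2. -/
/-!
Averaging the loss over the cost proportion leaves `π₀ (1 - F₀ T) + π₁ F₁ T` at the threshold
`T = R⁻¹ r`. The components `π₀ F₀ ∘ R⁻¹` and `π₁ F₁ ∘ R⁻¹` are monotone and add up to the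
identity on `[0, 1]`, so they are 1-Lipschitz, and the substitution `r = R t` is legitimate even
though `R⁻¹` is only a right inverse of `R`. It turns the average over rates into
`∫ R'(t) (π₀ (1 - F₀ t) + π₁ F₁ t) dt`. Adding `2 π₀ π₁ F₀ f₁` to this integrand makes it the
derivative of a polynomial in `F₀` and `F₁`, whose limits at `±∞` give its integral.
-/

open MeasureTheory Filter Set Topology

theorem Monotone.le_and_le_of_add_le_add {α : Type*} [LinearOrder α] {u v : α → ℝ}
    (hu : Monotone u) (hv : Monotone v) {s t : α} (h : u s + v s ≤ u t + v t) :
    u s ≤ u t ∧ v s ≤ v t := by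
  rcases le_total s t with hst | hts
  · exact ⟨hu hst, hv hst⟩
  · exact ⟨by linarith [hu hts, hv hts], by linarith [hu hts, hv hts]⟩

theorem Monotone.eq_and_eq_of_add_eq_add {α : Type*} [LinearOrder α] {u v : α → ℝ}
    (hu : Monotone u) (hv : Monotone v) {s t : α} (h : u s + v s = u t + v t) :
    u s = u t ∧ v s = v t := by
  obtain ⟨hu₁, hv₁⟩ := hu.le_and_le_of_add_le_add hv h.le
  obtain ⟨hu₂, hv₂⟩ := hu.le_and_le_of_add_le_add hv h.ge
  exact ⟨hu₁.antisymm hu₂, hv₁.antisymm hv₂⟩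

theorem lipschitzOnWith_one_of_monotoneOn_of_add_eq {a b : ℝ → ℝ} {s : Set ℝ}
    (ha : MonotoneOn a s) (hb : MonotoneOn b s) (hab : ∀ r ∈ s, a r + b r = r) :
    LipschitzOnWith 1 a s := by
  refine LipschitzOnWith.of_dist_le_mul fun x hx y hy => ?_
  simp only [NNReal.coe_one, one_mul, Real.dist_eq]
  have hx' := hab x hx
  have hy' := hab y hy
  rcases le_total x y with hxy | hyx
  · have := hb hx hy hxy
    rw [abs_sub_comm, abs_of_nonneg (by linarith [ha hx hy hxy]), abs_sub_comm,
      abs_of_nonneg (by linarith)]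
    linarith
  · have := hb hy hx hyx
    rw [abs_of_nonneg (by linarith [ha hy hx hyx]), abs_of_nonneg (by linarith)]
    linarith

theorem Monotone.continuousOn_comp_of_add_comp_eq {u v ρ : ℝ → ℝ} {s : Set ℝ}
    (hu : Monotone u) (hv : Monotone v) (hρ : ∀ r ∈ s, u (ρ r) + v (ρ r) = r) :
    ContinuousOn (fun r => u (ρ r)) s := by
  have hmono : ∀ r ∈ s, ∀ r' ∈ s, r ≤ r' → u (ρ r) ≤ u (ρ r') ∧ v (ρ r) ≤ v (ρ r') :=
    fun r hr r' hr' h => hu.le_and_le_of_add_le_add hv (by rw [hρ r hr, hρ r' hr']; exact h)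
  exact (lipschitzOnWith_one_of_monotoneOn_of_add_eq (fun r hr r' hr' h => (hmono r hr r' hr' h).1)
    (fun r hr r' hr' h => (hmono r hr r' hr' h).2) hρ).continuousOn

theorem Monotone.mem_Icc_of_tendsto {F : ℝ → ℝ} (hF : Monotone F) {a b : ℝ}
    (hbot : Tendsto F atBot (𝓝 a)) (htop : Tendsto F atTop (𝓝 b)) (t : ℝ) : F t ∈ Icc a b :=
  ⟨hF.le_of_tendsto hbot t, hF.ge_of_tendsto htop t⟩

theorem MeasureTheory.Integrable.mul_of_mem_Icc {α : Type*} [MeasurableSpace α] {μ : Measure α}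
    {f g : α → ℝ} (hf : Integrable f μ) (hg : AEStronglyMeasurable g μ)
    (hmem : ∀ x, g x ∈ Icc (0:ℝ) 1) : Integrable (fun x => f x * g x) μ :=
  hf.mul_bdd (c := 1) hg
    (ae_of_all _ fun x => (Real.norm_of_nonneg (hmem x).1).trans_le (hmem x).2)

theorem intervalIntegral_two_mul_convex_comb (A B : ℝ) :
    ∫ c in (0:ℝ)..1, 2 * (c * A + (1 - c) * B) = A + B := by
  have hderiv : ∀ c : ℝ, HasDerivAt (fun c => c ^ 2 * (A - B) + 2 * c * B)
      (2 * (c * A + (1 - c) * B)) c := fun c => by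
    refine (((hasDerivAt_pow 2 c).mul_const (A - B)).add
      (((hasDerivAt_id' c).const_mul 2).mul_const B)).congr_deriv ?_
    push_cast
    ring
  rw [intervalIntegral.integral_eq_sub_of_hasDerivAt (fun c _ => hderiv c)
    (by apply Continuous.intervalIntegrable; fun_prop)]
  ring

theorem integral_deriv_mul_comp_eq_intervalIntegral {R R' g : ℝ → ℝ} {a b : ℝ}
    (hR : ∀ x, HasDerivAt R (R' x) x) (hRmem : ∀ x, R x ∈ Icc a b)
    (hbot : Tendsto R atBot (𝓝 a)) (htop : Tendsto R atTop (𝓝 b))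
    (hg : ContinuousOn g (Icc a b)) (hint : Integrable fun x => R' x * g (R x)) :
    ∫ x, R' x * g (R x) = ∫ u in a..b, g u := by
  have hab : a ≤ b := (hRmem 0).1.trans (hRmem 0).2
  set g' : ℝ → ℝ := fun u => g (projIcc a b hab u)
  have hg' : Continuous g' :=
    hg.comp_continuous (continuous_subtype_val.comp continuous_projIcc) fun u => Subtype.prop _
  have hg'R : ∀ x, g' (R x) = g (R x) := fun x => by simp [g', projIcc_of_mem hab (hRmem x)]
  set G : ℝ → ℝ := fun u => ∫ v in a..u, g' v
  have hG : ∀ x, HasDerivAt (G ∘ R) (R' x * g (R x)) x := fun x => by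
    rw [mul_comm, ← hg'R]
    exact ((hg'.integral_hasStrictDerivAt a _).hasDerivAt).comp x (hR x)
  have hGcont : Continuous G := continuous_iff_continuousAt.2 fun u =>
    (hg'.integral_hasStrictDerivAt a u).hasDerivAt.continuousAt
  have hGa : G a = 0 := intervalIntegral.integral_same
  have hGb : G b = ∫ u in a..b, g u := intervalIntegral.integral_congr fun u hu => by
    rw [uIcc_of_le hab] at hu
    simp [g', projIcc_of_mem hab hu]
  have := integral_of_hasDerivAt_of_tendsto hG hint
    (hGa ▸ (hGcont.tendsto a).comp hbot) ((hGcont.tendsto b).comp htop)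
  rw [this, hGb, sub_zero]

theorem intervalIntegral_comp_rightInverse_add_eq_integral {u v u' v' ρ : ℝ → ℝ} {a b : ℝ}
    {h : ℝ → ℝ → ℝ} (hu : Monotone u) (hv : Monotone v)
    (hu' : ∀ x, HasDerivAt u (u' x) x) (hv' : ∀ x, HasDerivAt v (v' x) x)
    (hmem : ∀ x, u x + v x ∈ Icc a b) (hbot : Tendsto (fun x => u x + v x) atBot (𝓝 a))
    (htop : Tendsto (fun x => u x + v x) atTop (𝓝 b))
    (hρ : ∀ r ∈ Icc a b, u (ρ r) + v (ρ r) = r) (hh : Continuous (Function.uncurry h))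
    (hint : Integrable fun x => (u' x + v' x) * h (u x) (v x)) :
    ∫ r in a..b, h (u (ρ r)) (v (ρ r)) = ∫ x, (u' x + v' x) * h (u x) (v x) := by
  have hcont : ContinuousOn (fun r => h (u (ρ r)) (v (ρ r))) (Icc a b) :=
    hh.comp_continuousOn ((hu.continuousOn_comp_of_add_comp_eq hv hρ).prodMk
      (hv.continuousOn_comp_of_add_comp_eq hu fun r hr => (add_comm _ _).trans (hρ r hr)))
  -- `ρ (u x + v x)` need not be `x`, but `u` and `v` cannot tell them apart
  have hcomp : ∀ x, h (u (ρ (u x + v x))) (v (ρ (u x + v x))) = h (u x) (v x) := fun x => by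
    obtain ⟨hux, hvx⟩ := hu.eq_and_eq_of_add_eq_add hv (hρ _ (hmem x))
    rw [hux, hvx]
  rw [← integral_deriv_mul_comp_eq_intervalIntegral (fun x => (hu' x).add (hv' x)) hmem hbot htop
    hcont]
  · simp only [Pi.add_apply, hcomp]
  · simpa only [Pi.add_apply, hcomp] using hint

theorem integral_mixture_density_mul_loss {F0 F1 f0 f1 : ℝ → ℝ} (p q : ℝ)
    (hF0 : ∀ x, HasDerivAt F0 (f0 x) x) (hF1 : ∀ x, HasDerivAt F1 (f1 x) x)
    (hF0bot : Tendsto F0 atBot (𝓝 0)) (hF0top : Tendsto F0 atTop (𝓝 1))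
    (hF1bot : Tendsto F1 atBot (𝓝 0)) (hF1top : Tendsto F1 atTop (𝓝 1))
    (hint : Integrable fun x => (p * f0 x + q * f1 x) * (p - p * F0 x + q * F1 x))
    (hint' : Integrable fun x => F0 x * f1 x) :
    ∫ x, (p * f0 x + q * f1 x) * (p - p * F0 x + q * F1 x)
      = p ^ 2 / 2 + 2 * p * q + q ^ 2 / 2 - 2 * p * q * ∫ x, F0 x * f1 x := by
  -- `Φ (F0, F1)` is a primitive of the integrand plus `2 p q F0 f1`
  set Φ : ℝ × ℝ → ℝ := fun z => p ^ 2 * (z.1 - z.1 ^ 2 / 2) + p * q * (z.1 * z.2 + z.2)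
    + q ^ 2 * z.2 ^ 2 / 2
  have hΦ : Continuous Φ := by fun_prop
  have hderiv : ∀ x, HasDerivAt (fun y => Φ (F0 y, F1 y))
      ((p * f0 x + q * f1 x) * (p - p * F0 x + q * F1 x) + 2 * p * q * (F0 x * f1 x)) x :=
    fun x => by
      have h0 := hF0 x
      have h1 := hF1 x
      refine ((((h0.sub ((h0.pow 2).div_const 2)).const_mul (p ^ 2)).add
        (((h0.mul h1).add h1).const_mul (p * q))).add
        (((h1.pow 2).const_mul (q ^ 2)).div_const 2)).congr_deriv ?_
      push_cast
      ring
  have hbot : Tendsto (fun y => Φ (F0 y, F1 y)) atBot (𝓝 0) := by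
    have h := (hΦ.tendsto (0, 0)).comp (hF0bot.prodMk_nhds hF1bot)
    rwa [show Φ (0, 0) = 0 by simp [Φ]] at h
  have htop : Tendsto (fun y => Φ (F0 y, F1 y)) atTop (𝓝 (p ^ 2 / 2 + 2 * p * q + q ^ 2 / 2)) := by
    have h := (hΦ.tendsto (1, 1)).comp (hF0top.prodMk_nhds hF1top)
    rwa [show Φ (1, 1) = p ^ 2 / 2 + 2 * p * q + q ^ 2 / 2 by simp only [Φ]; ring] at h
  have := integral_of_hasDerivAt_of_tendsto hderiv (hint.add (hint'.const_mul _)) hbot htop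
  rw [integral_add hint (hint'.const_mul _), integral_const_mul] at this
  linarith

/-- Rate-uniform threshold choice: expected loss over uniform rates and uniform cost
    proportions equals `π₀π₁(1 - 2 AUC) + 1/2`. -/
theorem rate_uniform_expected_loss
    (π0 π1 : ℝ) (hπ0 : 0 ≤ π0) (hπ1 : 0 ≤ π1) (hπ : π0 + π1 = 1)
    (f0 f1 F0 F1 : ℝ → ℝ)
    (hf0 : ∀ s, 0 ≤ f0 s) (hf1 : ∀ s, 0 ≤ f1 s)
    (hF0deriv : ∀ t, HasDerivAt F0 (f0 t) t)
    (hF1deriv : ∀ t, HasDerivAt F1 (f1 t) t)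
    (hF0bot : Tendsto F0 atBot (nhds 0)) (hF0top : Tendsto F0 atTop (nhds 1))
    (hF1bot : Tendsto F1 atBot (nhds 0)) (hF1top : Tendsto F1 atTop (nhds 1))
    (hf0int : Integrable f0) (hf1int : Integrable f1)
    (Rinv : ℝ → ℝ)
    (hRinv : ∀ r ∈ Set.Icc (0:ℝ) 1, π0 * F0 (Rinv r) + π1 * F1 (Rinv r) = r)
    (AUC : ℝ) (hAUC : AUC = ∫ s, F0 s * f1 s) :
    (∫ r in (0:ℝ)..1, ∫ c in (0:ℝ)..1,
        2 * (c * π0 * (1 - F0 (Rinv r)) + (1 - c) * π1 * F1 (Rinv r)))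
      = π0 * π1 * (1 - 2 * AUC) + 1 / 2 := by
  have hF0 := monotone_of_hasDerivAt_nonneg hF0deriv hf0
  have hF1 := monotone_of_hasDerivAt_nonneg hF1deriv hf1
  have hF0mem := hF0.mem_Icc_of_tendsto hF0bot hF0top
  have hF1mem := hF1.mem_Icc_of_tendsto hF1bot hF1top
  have hF0c : Continuous F0 := continuous_iff_continuousAt.2 fun t => (hF0deriv t).continuousAt
  have hF1c : Continuous F1 := continuous_iff_continuousAt.2 fun t => (hF1deriv t).continuousAt
  have hloss : ∀ t, π0 - π0 * F0 t + π1 * F1 t ∈ Icc (0:ℝ) 1 := fun t => by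
    simpa only [smul_eq_mul, mul_one_sub] using
      convex_Icc 0 1 (Icc.mem_iff_one_sub_mem.1 (hF0mem t)) (hF1mem t) hπ0 hπ1 hπ
  have hint : Integrable fun x => (π0 * f0 x + π1 * f1 x) * (π0 - π0 * F0 x + π1 * F1 x) :=
    ((hf0int.const_mul π0).add (hf1int.const_mul π1)).mul_of_mem_Icc (by fun_prop) hloss
  have hint' : Integrable fun x => F0 x * f1 x := by
    simpa only [mul_comm] using hf1int.mul_of_mem_Icc hF0c.aestronglyMeasurable hF0mem
  calc (∫ r in (0:ℝ)..1, ∫ c in (0:ℝ)..1,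
        2 * (c * π0 * (1 - F0 (Rinv r)) + (1 - c) * π1 * F1 (Rinv r)))
      = ∫ r in (0:ℝ)..1, (π0 - π0 * F0 (Rinv r) + π1 * F1 (Rinv r)) := by
        simp_rw [mul_assoc, intervalIntegral_two_mul_convex_comb, mul_one_sub]
    _ = ∫ x, (π0 * f0 x + π1 * f1 x) * (π0 - π0 * F0 x + π1 * F1 x) :=
        intervalIntegral_comp_rightInverse_add_eq_integral (h := fun a b => π0 - a + b)
          (fun s t hst => mul_le_mul_of_nonneg_left (hF0 hst) hπ0)
          (fun s t hst => mul_le_mul_of_nonneg_left (hF1 hst) hπ1)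
          (fun x => (hF0deriv x).const_mul π0) (fun x => (hF1deriv x).const_mul π1)
          (fun t => convex_Icc 0 1 (hF0mem t) (hF1mem t) hπ0 hπ1 hπ)
          (by simpa using (hF0bot.const_mul π0).add (hF1bot.const_mul π1))
          (by simpa [hπ] using (hF0top.const_mul π0).add (hF1top.const_mul π1))
          hRinv (by fun_prop) hint
    _ = π0 ^ 2 / 2 + 2 * π0 * π1 + π1 ^ 2 / 2 - 2 * π0 * π1 * AUC := by
        rw [hAUC]
        exact integral_mixture_density_mul_loss π0 π1 hF0deriv hF1deriv hF0bot hF0top hF1bot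
          hF1top hint hint'
    _ = π0 * π1 * (1 - 2 * AUC) + 1 / 2 := by linear_combination (π0 + π1 + 1) / 2 * hπ
end

section
/- Under the rate-driven threshold choice method, which sets the threshold T(c) = R⁻¹(c), the expected loss for uniform cost proportions equals π₀π₁(1 − 2·AUC) + 1/3. -/
/-!
Since `π₀F₀(R⁻¹c) = c - π₁F₁(R⁻¹c)`, the loss at cost proportion `c` is
`2π₀c - 2c² + 2π₁F₁(R⁻¹c)`, so only `∫₀¹ π₁F₁(R⁻¹c) dc` is left. Both `c ↦ π₁F₁(R⁻¹c)` and
`c ↦ π₀F₀(R⁻¹c) = c - π₁F₁(R⁻¹c)` are monotone, so the former is `1`-Lipschitz, and it equals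
`π₁F₁(t)` at `c = R(t)` even where `R` has flat pieces. The substitution `c = R(t)` then gives
`∫ π₁F₁ (π₀f₀ + π₁f₁) = π₀π₁(1 - AUC) + π₁²/2`, by integration by parts.
-/

open MeasureTheory Filter Set Topology

theorem Monotone.le_of_add_le_add {α β : Type*} [LinearOrder α] [AddCommMonoid β] [LinearOrder β]
    [IsOrderedCancelAddMonoid β] {A B : α → β} (hA : Monotone A) (hB : Monotone B) {x y : α}
    (h : A x + B x ≤ A y + B y) : B x ≤ B y := by
  rcases le_total x y with hxy | hyx
  · exact hB hxy
  · by_contra! hlt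
    exact (add_lt_add_of_le_of_lt (hA hyx) hlt).not_ge h

section RightInverse

variable {α : Type*} [LinearOrder α] {A B : α → ℝ} {S : ℝ → α} {s : Set ℝ}

theorem Monotone.apply_rightInverse_add_eq (hA : Monotone A) (hB : Monotone B)
    (hS : ∀ c ∈ s, A (S c) + B (S c) = c) {t : α} (ht : A t + B t ∈ s) :
    B (S (A t + B t)) = B t :=
  le_antisymm (hA.le_of_add_le_add hB (hS _ ht).le) (hA.le_of_add_le_add hB (hS _ ht).ge)

theorem Monotone.lipschitzOnWith_comp_rightInverse_add (hA : Monotone A) (hB : Monotone B)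
    (hS : ∀ c ∈ s, A (S c) + B (S c) = c) : LipschitzOnWith 1 (B ∘ S) s := by
  refine LipschitzOnWith.of_le_add fun x hx y hy => ?_
  show B (S x) ≤ B (S y) + dist x y
  rcases le_total x y with hxy | hyx
  · have hBxy : B (S x) ≤ B (S y) :=
      hA.le_of_add_le_add hB (by rw [hS x hx, hS y hy]; exact hxy)
    linarith [dist_nonneg (x := x) (y := y)]
  · have hAyx : A (S y) ≤ A (S x) :=
      hB.le_of_add_le_add hA (by rw [add_comm, hS y hy, add_comm, hS x hx]; exact hyx)
    rw [Real.dist_eq, abs_of_nonneg (sub_nonneg.2 hyx)]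
    linarith [hS x hx, hS y hy]

end RightInverse

structure IsCDFWithDensity (F f : ℝ → ℝ) : Prop where
  hasDerivAt : ∀ t, HasDerivAt F (f t) t
  nonneg : ∀ t, 0 ≤ f t
  tendsto_atBot : Tendsto F atBot (𝓝 0)
  tendsto_atTop : Tendsto F atTop (𝓝 1)
  integrable : Integrable f

namespace IsCDFWithDensity

variable {F f G g : ℝ → ℝ}

theorem monotone (hF : IsCDFWithDensity F f) : Monotone F :=
  monotone_of_hasDerivAt_nonneg hF.hasDerivAt hF.nonneg

theorem mem_Icc (hF : IsCDFWithDensity F f) (t : ℝ) : F t ∈ Icc 0 1 :=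
  ⟨hF.monotone.le_of_tendsto hF.tendsto_atBot t, hF.monotone.ge_of_tendsto hF.tendsto_atTop t⟩

theorem continuous (hF : IsCDFWithDensity F f) : Continuous F :=
  continuous_iff_continuousAt.2 fun t => (hF.hasDerivAt t).continuousAt

theorem integrable_mul (hF : IsCDFWithDensity F f) (hg : Integrable g) :
    Integrable fun t => F t * g t :=
  hg.bdd_mul hF.continuous.aestronglyMeasurable <| ae_of_all _ fun t => by
    rw [Real.norm_eq_abs, abs_le]
    exact ⟨by linarith [(hF.mem_Icc t).1], (hF.mem_Icc t).2⟩

theorem mixture {F₀ f₀ F₁ f₁ : ℝ → ℝ} (hF₀ : IsCDFWithDensity F₀ f₀)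
    (hF₁ : IsCDFWithDensity F₁ f₁) {π₀ π₁ : ℝ} (hπ₀ : 0 ≤ π₀) (hπ₁ : 0 ≤ π₁) (hπ : π₀ + π₁ = 1) :
    IsCDFWithDensity (fun t => π₀ * F₀ t + π₁ * F₁ t) (fun t => π₀ * f₀ t + π₁ * f₁ t) where
  hasDerivAt t := ((hF₀.hasDerivAt t).const_mul π₀).add ((hF₁.hasDerivAt t).const_mul π₁)
  nonneg t := add_nonneg (mul_nonneg hπ₀ (hF₀.nonneg t)) (mul_nonneg hπ₁ (hF₁.nonneg t))
  tendsto_atBot := by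
    simpa using (hF₀.tendsto_atBot.const_mul π₀).add (hF₁.tendsto_atBot.const_mul π₁)
  tendsto_atTop := by
    simpa [hπ] using (hF₀.tendsto_atTop.const_mul π₀).add (hF₁.tendsto_atTop.const_mul π₁)
  integrable := (hF₀.integrable.const_mul π₀).add (hF₁.integrable.const_mul π₁)

theorem integral_mul_density_eq_one_sub (hF : IsCDFWithDensity F f) (hG : IsCDFWithDensity G g) :
    ∫ t, F t * g t = 1 - ∫ t, G t * f t := by
  have h := integral_mul_deriv_eq_deriv_mul (u := F) (v := G) (u' := f) (v' := g)
    (fun t _ => hF.hasDerivAt t) (fun t _ => hG.hasDerivAt t)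
    (hF.integrable_mul hG.integrable)
    ((hG.integrable_mul hF.integrable).congr (ae_of_all _ fun t => mul_comm _ _))
    (hF.tendsto_atBot.mul hG.tendsto_atBot) (hF.tendsto_atTop.mul hG.tendsto_atTop)
  simpa only [mul_one, mul_zero, sub_zero, mul_comm (f _)] using h

theorem integral_mul_density_self (hF : IsCDFWithDensity F f) : ∫ t, F t * f t = 1 / 2 := by
  linarith [hF.integral_mul_density_eq_one_sub hF]

theorem integral_mul_mixture_density {F₀ f₀ F₁ f₁ : ℝ → ℝ} (hF₀ : IsCDFWithDensity F₀ f₀)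
    (hF₁ : IsCDFWithDensity F₁ f₁) (π₀ π₁ : ℝ) :
    ∫ t, π₁ * F₁ t * (π₀ * f₀ t + π₁ * f₁ t)
      = π₀ * π₁ * (1 - ∫ t, F₀ t * f₁ t) + π₁ ^ 2 / 2 := calc
  _ = ∫ t, π₀ * π₁ * (F₁ t * f₀ t) + π₁ ^ 2 * (F₁ t * f₁ t) := by congr with t; ring
  _ = π₀ * π₁ * (∫ t, F₁ t * f₀ t) + π₁ ^ 2 * ∫ t, F₁ t * f₁ t := by
    rw [integral_add ((hF₁.integrable_mul hF₀.integrable).const_mul _)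
      ((hF₁.integrable_mul hF₁.integrable).const_mul _), integral_const_mul, integral_const_mul]
  _ = π₀ * π₁ * (1 - ∫ t, F₀ t * f₁ t) + π₁ ^ 2 / 2 := by
    rw [hF₁.integral_mul_density_eq_one_sub hF₀, hF₁.integral_mul_density_self]
    ring

theorem integral_comp_mul_density (hF : IsCDFWithDensity F f) (hg : ContinuousOn g (Icc 0 1)) :
    ∫ t, g (F t) * f t = ∫ c in (0 : ℝ)..1, g c := by
  set g' := IccExtend zero_le_one ((Icc 0 1).domRestrict g)
  have hg' : Continuous g' := continuous_IccExtend_iff.2 hg.domRestrict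
  have hg'g : EqOn g' g (Icc 0 1) := fun c hc => IccExtend_of_mem _ _ hc
  have hprim (u : ℝ) : HasDerivAt (fun u => ∫ c in (0 : ℝ)..u, g' c) (g' u) u :=
    (hg'.integral_hasStrictDerivAt 0 u).hasDerivAt
  obtain ⟨C, hC⟩ := isCompact_Icc.exists_bound_of_continuousOn hg
  have hint : Integrable fun t => g (F t) * f t :=
    hF.integrable.bdd_mul (hg.comp_continuous hF.continuous hF.mem_Icc).aestronglyMeasurable
      (ae_of_all _ fun t => hC _ (hF.mem_Icc t))
  rw [integral_of_hasDerivAt_of_tendsto (fun t => ?_) hint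
      ((hprim 0).continuousAt.tendsto.comp hF.tendsto_atBot)
      ((hprim 1).continuousAt.tendsto.comp hF.tendsto_atTop),
    intervalIntegral.integral_same, sub_zero]
  · exact intervalIntegral.integral_congr fun c hc => hg'g (uIcc_of_le (zero_le_one (α := ℝ)) ▸ hc)
  · simpa only [hg'g (hF.mem_Icc t)] using (hprim (F t)).comp t (hF.hasDerivAt t)

end IsCDFWithDensity

/-- Rate-driven threshold choice: expected loss over uniform cost proportions equals
    `π₀π₁(1 - 2 AUC) + 1/3`. -/
theorem rate_driven_expected_loss
    (π0 π1 : ℝ) (hπ0 : 0 ≤ π0) (hπ1 : 0 ≤ π1) (hπ : π0 + π1 = 1)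
    (f0 f1 F0 F1 : ℝ → ℝ)
    (hf0 : ∀ s, 0 ≤ f0 s) (hf1 : ∀ s, 0 ≤ f1 s)
    (hF0deriv : ∀ t, HasDerivAt F0 (f0 t) t)
    (hF1deriv : ∀ t, HasDerivAt F1 (f1 t) t)
    (hF0bot : Tendsto F0 atBot (nhds 0)) (hF0top : Tendsto F0 atTop (nhds 1))
    (hF1bot : Tendsto F1 atBot (nhds 0)) (hF1top : Tendsto F1 atTop (nhds 1))
    (hf0int : Integrable f0) (hf1int : Integrable f1)
    (Rinv : ℝ → ℝ)
    (hRinv : ∀ c ∈ Set.Icc (0:ℝ) 1, π0 * F0 (Rinv c) + π1 * F1 (Rinv c) = c)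
    (AUC : ℝ) (hAUC : AUC = ∫ s, F0 s * f1 s) :
    (∫ c in (0:ℝ)..1,
        2 * (c * π0 * (1 - F0 (Rinv c)) + (1 - c) * π1 * F1 (Rinv c)))
      = π0 * π1 * (1 - 2 * AUC) + 1 / 3 := by
  have hF0 : IsCDFWithDensity F0 f0 := ⟨hF0deriv, hf0, hF0bot, hF0top, hf0int⟩
  have hF1 : IsCDFWithDensity F1 f1 := ⟨hF1deriv, hf1, hF1bot, hF1top, hf1int⟩
  have hA : Monotone fun t => π0 * F0 t := hF0.monotone.const_mul hπ0
  have hB : Monotone fun t => π1 * F1 t := hF1.monotone.const_mul hπ1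
  have hR := hF0.mixture hF1 hπ0 hπ1 hπ
  have hg : ContinuousOn (fun c => π1 * F1 (Rinv c)) (Icc 0 1) :=
    (hA.lipschitzOnWith_comp_rightInverse_add hB hRinv).continuousOn
  have hloss : (∫ c in (0:ℝ)..1,
      2 * (c * π0 * (1 - F0 (Rinv c)) + (1 - c) * π1 * F1 (Rinv c)))
      = ∫ c in (0:ℝ)..1, (2 * π0 * c - 2 * c ^ 2 + 2 * (π1 * F1 (Rinv c))) := by
    refine intervalIntegral.integral_congr fun c hc => ?_
    rw [uIcc_of_le zero_le_one] at hc
    linear_combination (-2 * c) * hRinv c hc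
  have hsubst : ∫ c in (0:ℝ)..1, π1 * F1 (Rinv c)
      = ∫ t, π1 * F1 t * (π0 * f0 t + π1 * f1 t) := by
    rw [← hR.integral_comp_mul_density hg]
    congr with t
    rw [hA.apply_rightInverse_add_eq hB hRinv (hR.mem_Icc t)]
  have hpoly : ∫ c in (0:ℝ)..1, (2 * π0 * c - 2 * c ^ 2) = π0 - 2 / 3 := by
    rw [intervalIntegral.integral_sub (Continuous.intervalIntegrable (by fun_prop) _ _)
      (Continuous.intervalIntegrable (by fun_prop) _ _), intervalIntegral.integral_const_mul,
      intervalIntegral.integral_const_mul, integral_id, integral_pow]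
    ring
  rw [hloss, intervalIntegral.integral_add (Continuous.intervalIntegrable (by fun_prop) _ _)
      ((hg.intervalIntegrable_of_Icc zero_le_one).const_mul 2),
    hpoly, intervalIntegral.integral_const_mul, hsubst, hF0.integral_mul_mixture_density hF1,
    ← hAUC]
  linear_combination (1 + π1) * hπ
end

section
/- If a model is perfectly calibrated then π₀ s̄₀ = π₁ (1 − s̄₁), i.e. π₀·MAE₀ = π₁·MAE₁. -/
/-! Integrating the calibration identity `s (π₀ f₀ s + π₁ f₁ s) = π₁ f₁ s` over `[0, 1]` gives
`π₀ s̄₀ + π₁ s̄₁ = π₁ ∫ f₁ = π₁`. -/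

open MeasureTheory

theorem weighted_score_integral_eq_of_calibrated {α : Type*} [MeasurableSpace α] {μ : Measure α}
    {s f₀ f₁ : α → ℝ} {π₀ π₁ : ℝ}
    (h₀ : Integrable (fun x => s x * f₀ x) μ) (h₁ : Integrable (fun x => s x * f₁ x) μ)
    (hcal : ∀ᵐ x ∂μ, s x * (π₀ * f₀ x + π₁ * f₁ x) = π₁ * f₁ x) :
    π₀ * ∫ x, s x * f₀ x ∂μ + π₁ * ∫ x, s x * f₁ x ∂μ = π₁ * ∫ x, f₁ x ∂μ :=
  calc π₀ * ∫ x, s x * f₀ x ∂μ + π₁ * ∫ x, s x * f₁ x ∂μ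
      = ∫ x, s x * (π₀ * f₀ x + π₁ * f₁ x) ∂μ := by
        rw [← integral_const_mul, ← integral_const_mul, ← integral_add (h₀.const_mul π₀)
          (h₁.const_mul π₁)]
        congr with x
        ring
    _ = ∫ x, π₁ * f₁ x ∂μ := integral_congr_ae hcal
    _ = π₁ * ∫ x, f₁ x ∂μ := integral_const_mul π₁ f₁

theorem intervalIntegral_eq_setIntegral_Icc {μ : Measure ℝ} [NullSingletonClass μ] {a b : ℝ}
    (hab : a ≤ b) (f : ℝ → ℝ) : ∫ x in a..b, f x ∂μ = ∫ x in Set.Icc a b, f x ∂μ := by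
  rw [intervalIntegral.integral_of_le hab, integral_Icc_eq_integral_Ioc]

theorem IntervalIntegrable.integrableOn_Icc_id_mul {μ : Measure ℝ} [NullSingletonClass μ]
    {a b : ℝ} (hab : a ≤ b) {f : ℝ → ℝ} (hf : IntervalIntegrable f μ a b) :
    IntegrableOn (fun x => x * f x) (Set.Icc a b) μ :=
  (intervalIntegrable_iff_integrableOn_Icc_of_le hab).1 (hf.continuousOn_mul continuousOn_id)

theorem perfectly_calibrated_mean_identity_general
    (π0 π1 : ℝ)
    (f0 f1 : ℝ → ℝ)
    (hf0int : IntervalIntegrable f0 volume 0 1)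
    (hf1int : IntervalIntegrable f1 volume 0 1)
    (hf1norm : (∫ s in (0:ℝ)..1, f1 s) = 1)
    (hcal : ∀ᵐ s ∂(volume.restrict (Set.Icc (0:ℝ) 1)),
        s * (π0 * f0 s + π1 * f1 s) = π1 * f1 s) :
    π0 * (∫ s in (0:ℝ)..1, s * f0 s) = π1 * (1 - ∫ s in (0:ℝ)..1, s * f1 s) := by
  have key := weighted_score_integral_eq_of_calibrated (hf0int.integrableOn_Icc_id_mul zero_le_one)
    (hf1int.integrableOn_Icc_id_mul zero_le_one) hcal
  simp only [← intervalIntegral_eq_setIntegral_Icc zero_le_one, hf1norm, mul_one] at key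
  linarith

/-- For a perfectly calibrated model, `π₀ s̄₀ = π₁ (1 - s̄₁)`. -/
theorem perfectly_calibrated_mean_identity
    (π0 π1 : ℝ) (hπ0 : 0 ≤ π0) (hπ1 : 0 ≤ π1) (hπ : π0 + π1 = 1)
    (f0 f1 : ℝ → ℝ)
    (hf0 : ∀ s, 0 ≤ f0 s) (hf1 : ∀ s, 0 ≤ f1 s)
    (hf0int : IntervalIntegrable f0 volume 0 1)
    (hf1int : IntervalIntegrable f1 volume 0 1)
    (hf0norm : (∫ s in (0:ℝ)..1, f0 s) = 1)
    (hf1norm : (∫ s in (0:ℝ)..1, f1 s) = 1)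
    (hcal : ∀ᵐ s ∂(volume.restrict (Set.Icc (0:ℝ) 1)),
        s * (π0 * f0 s + π1 * f1 s) = π1 * f1 s) :
    π0 * (∫ s in (0:ℝ)..1, s * f0 s) = π1 * (1 - ∫ s in (0:ℝ)..1, s * f1 s) :=
  perfectly_calibrated_mean_identity_general π0 π1 f0 f1 hf0int hf1int hf1norm hcal
end

section
/- If a model is perfectly calibrated then its Brier score satisfies BS = π₁(1 − s̄₁) = π₀ s̄₀ = MAE/2. -/
/-!
Calibration says `π₀ s f₀(s) = π₁ (1 - s) f₁(s)` for almost every `s`. Integrating this identity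
against `1` and against `s` gives `π₀ s̄₀ = π₁ (1 - s̄₁)` and
`π₀ ∫ s² f₀ = π₁ ∫ s (1 - s) f₁`; adding `π₁ ∫ (1 - s)² f₁` to the latter turns the Brier score
into `π₁ ∫ (1 - s) f₁ = π₁ (1 - s̄₁)`.
-/

open MeasureTheory Set
open scoped Interval

theorem intervalIntegral.const_mul_integral_eq_of_ae {μ : Measure ℝ} {a b c d : ℝ}
    {F G : ℝ → ℝ} (h : ∀ᵐ s ∂μ.restrict (Ι a b), c * F s = d * G s) :
    c * ∫ s in a..b, F s ∂μ = d * ∫ s in a..b, G s ∂μ := by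
  simpa only [← intervalIntegral.integral_const_mul] using
    intervalIntegral.integral_congr_ae_restrict h

theorem perfectly_calibrated_brier_general
    (π0 π1 : ℝ)
    (f0 f1 : ℝ → ℝ)
    (hf1int : IntervalIntegrable f1 volume 0 1)
    (hf1norm : (∫ s in (0:ℝ)..1, f1 s) = 1)
    (hcal : ∀ᵐ s ∂(volume.restrict (Set.Icc (0:ℝ) 1)),
        s * (π0 * f0 s + π1 * f1 s) = π1 * f1 s) :
    π0 * (∫ s in (0:ℝ)..1, s ^ 2 * f0 s) + π1 * (∫ s in (0:ℝ)..1, (1 - s) ^ 2 * f1 s)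
        = π1 * (1 - ∫ s in (0:ℝ)..1, s * f1 s) ∧
    π0 * (∫ s in (0:ℝ)..1, s ^ 2 * f0 s) + π1 * (∫ s in (0:ℝ)..1, (1 - s) ^ 2 * f1 s)
        = π0 * (∫ s in (0:ℝ)..1, s * f0 s) ∧
    π0 * (∫ s in (0:ℝ)..1, s ^ 2 * f0 s) + π1 * (∫ s in (0:ℝ)..1, (1 - s) ^ 2 * f1 s)
        = (π0 * (∫ s in (0:ℝ)..1, s * f0 s)
            + π1 * (1 - ∫ s in (0:ℝ)..1, s * f1 s)) / 2 := by
  have hcal' : ∀ᵐ s ∂volume.restrict (Ι (0:ℝ) 1),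
      s * (π0 * f0 s + π1 * f1 s) = π1 * f1 s :=
    ae_restrict_of_ae_restrict_of_subset (by simpa using Ioc_subset_Icc_self) hcal
  have hmean : π0 * ∫ s in (0:ℝ)..1, s * f0 s = π1 * ∫ s in (0:ℝ)..1, (1 - s) * f1 s :=
    intervalIntegral.const_mul_integral_eq_of_ae <| hcal'.mono fun s hs => by
      linear_combination hs
  have hsq : π0 * ∫ s in (0:ℝ)..1, s ^ 2 * f0 s
      = π1 * ∫ s in (0:ℝ)..1, s * (1 - s) * f1 s :=
    intervalIntegral.const_mul_integral_eq_of_ae <| hcal'.mono fun s hs => by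
      linear_combination s * hs
  have hsplit : ∫ s in (0:ℝ)..1, (1 - s) * f1 s
      = (∫ s in (0:ℝ)..1, s * (1 - s) * f1 s) + ∫ s in (0:ℝ)..1, (1 - s) ^ 2 * f1 s := by
    rw [← intervalIntegral.integral_add (hf1int.continuousOn_mul (by fun_prop))
      (hf1int.continuousOn_mul (by fun_prop))]
    congr 1 with s
    ring
  have hcompl : ∫ s in (0:ℝ)..1, (1 - s) * f1 s = 1 - ∫ s in (0:ℝ)..1, s * f1 s := by
    calc ∫ s in (0:ℝ)..1, (1 - s) * f1 s
        = (∫ s in (0:ℝ)..1, f1 s) - ∫ s in (0:ℝ)..1, s * f1 s := by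
          rw [← intervalIntegral.integral_sub hf1int
            (hf1int.continuousOn_mul (g := fun s => s) (by fun_prop))]
          congr 1 with s
          ring
      _ = 1 - ∫ s in (0:ℝ)..1, s * f1 s := by rw [hf1norm]
  have hbrier : π0 * (∫ s in (0:ℝ)..1, s ^ 2 * f0 s)
      + π1 * (∫ s in (0:ℝ)..1, (1 - s) ^ 2 * f1 s) = π1 * (1 - ∫ s in (0:ℝ)..1, s * f1 s) := by
    linear_combination hsq - π1 * hsplit + π1 * hcompl
  refine ⟨hbrier, ?_, ?_⟩
  · linear_combination hbrier - hmean - π1 * hcompl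
  · linear_combination hbrier - hmean / 2 - π1 * hcompl / 2

/-- For a perfectly calibrated model, `BS = π₁(1 - s̄₁) = π₀ s̄₀ = MAE/2`. -/
theorem perfectly_calibrated_brier
    (π0 π1 : ℝ) (hπ0 : 0 ≤ π0) (hπ1 : 0 ≤ π1) (hπ : π0 + π1 = 1)
    (f0 f1 : ℝ → ℝ)
    (hf0 : ∀ s, 0 ≤ f0 s) (hf1 : ∀ s, 0 ≤ f1 s)
    (hf0int : IntervalIntegrable f0 volume 0 1)
    (hf1int : IntervalIntegrable f1 volume 0 1)
    (hf0norm : (∫ s in (0:ℝ)..1, f0 s) = 1)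
    (hf1norm : (∫ s in (0:ℝ)..1, f1 s) = 1)
    (hcal : ∀ᵐ s ∂(volume.restrict (Set.Icc (0:ℝ) 1)),
        s * (π0 * f0 s + π1 * f1 s) = π1 * f1 s) :
    π0 * (∫ s in (0:ℝ)..1, s ^ 2 * f0 s) + π1 * (∫ s in (0:ℝ)..1, (1 - s) ^ 2 * f1 s)
        = π1 * (1 - ∫ s in (0:ℝ)..1, s * f1 s) ∧
    π0 * (∫ s in (0:ℝ)..1, s ^ 2 * f0 s) + π1 * (∫ s in (0:ℝ)..1, (1 - s) ^ 2 * f1 s)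
        = π0 * (∫ s in (0:ℝ)..1, s * f0 s) ∧
    π0 * (∫ s in (0:ℝ)..1, s ^ 2 * f0 s) + π1 * (∫ s in (0:ℝ)..1, (1 - s) ^ 2 * f1 s)
        = (π0 * (∫ s in (0:ℝ)..1, s * f0 s)
            + π1 * (1 - ∫ s in (0:ℝ)..1, s * f1 s)) / 2 :=
  perfectly_calibrated_brier_general π0 π1 f0 f1 hf1int hf1norm hcal
end

section
/- If the score distribution is evenly-spaced in the sense that R(t) = t for all t ∈ [0,1] (where R(t) = π₀F₀(t)+π₁F₁(t)), then the Brier score equals π₀π₁(1 − 2·AUC) + 1/3. -/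
/-!
Evenly spaced scores force the mixture density `π₀ f₀ + π₁ f₁` to be `1` almost everywhere on
`[0, 1]` (Lebesgue differentiation of `π₀ F₀ + π₁ F₁ = id`). Integrating `(1 - s)²` and `F₀`
against it expresses `π₁ ∫ (1 - s)² f₁` and `π₁ · AUC` through `f₀` alone, and the remaining
moments of `f₀` come from integration by parts against the absolutely continuous `F₀`:
`∫ s f₀ = 1 - ∫ F₀` and `∫ F₀ f₀ = 1 / 2`.
-/

open MeasureTheory Set Filter

namespace IntervalIntegrable

variable {f g : ℝ → ℝ} {a b : ℝ}

theorem ae_deriv_intervalIntegral_eq (hf : IntervalIntegrable f volume a b) :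
    ∀ᵐ x, x ∈ uIcc a b → deriv (fun x => ∫ t in a..x, f t) x = f x := by
  filter_upwards [hf.ae_hasDerivAt_integral] with x hx hx_mem
  exact (hx hx_mem a left_mem_uIcc).deriv

theorem ae_eq_of_forall_intervalIntegral_eq (hf : IntervalIntegrable f volume a b)
    (hg : IntervalIntegrable g volume a b)
    (h : ∀ x ∈ uIcc a b, ∫ t in a..x, f t = ∫ t in a..x, g t) :
    ∀ᵐ x, x ∈ uIoc a b → f x = g x := by
  filter_upwards [hf.ae_deriv_intervalIntegral_eq, hg.ae_deriv_intervalIntegral_eq,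
    Measure.ae_ne volume (max a b)] with x hfx hgx hx_ne hx
  have hx_mem : x ∈ Ioo (min a b) (max a b) := ⟨hx.1, lt_of_le_of_ne hx.2 hx_ne⟩
  have h_eventually : (fun x => ∫ t in a..x, f t) =ᶠ[nhds x] fun x => ∫ t in a..x, g t :=
    eventually_of_mem (Icc_mem_nhds hx_mem.1 hx_mem.2) h
  rw [← hfx (Ioo_subset_Icc_self hx_mem), ← hgx (Ioo_subset_Icc_self hx_mem),
    h_eventually.deriv_eq]

theorem integral_mul_eq_sub_integral_deriv_mul (hf : IntervalIntegrable f volume a b)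
    (hg : AbsolutelyContinuousOnInterval g a b) :
    ∫ x in a..b, g x * f x
      = g b * (∫ x in a..b, f x) - ∫ x in a..b, deriv g x * ∫ t in a..x, f t := by
  have h_ibp := hg.integral_mul_deriv_eq_deriv_mul
    (hf.absolutelyContinuousOnInterval_intervalIntegral (c := a) left_mem_uIcc)
  rw [intervalIntegral.integral_same, mul_zero, sub_zero] at h_ibp
  rw [← h_ibp]
  refine intervalIntegral.integral_congr_ae ?_
  filter_upwards [hf.ae_deriv_intervalIntegral_eq] with x hx hx_mem
  rw [hx (uIoc_subset_uIcc hx_mem)]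

theorem integral_id_mul_eq (hf : IntervalIntegrable f volume a b) :
    ∫ x in a..b, x * f x = b * (∫ x in a..b, f x) - ∫ x in a..b, ∫ t in a..x, f t := by
  simpa using hf.integral_mul_eq_sub_integral_deriv_mul
    (LipschitzWith.id.lipschitzOnWith (s := uIcc a b)).absolutelyContinuousOnInterval

theorem integral_intervalIntegral_mul_eq (hf : IntervalIntegrable f volume a b) :
    ∫ x in a..b, (∫ t in a..x, f t) * f x = (∫ x in a..b, f x) ^ 2 / 2 := by
  have h_ibp := hf.integral_mul_eq_sub_integral_deriv_mul
    (hf.absolutelyContinuousOnInterval_intervalIntegral (c := a) left_mem_uIcc)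
  have h_deriv : ∫ x in a..b, deriv (fun x => ∫ t in a..x, f t) x * ∫ t in a..x, f t
      = ∫ x in a..b, (∫ t in a..x, f t) * f x := by
    refine intervalIntegral.integral_congr_ae ?_
    filter_upwards [hf.ae_deriv_intervalIntegral_eq] with x hx hx_mem
    rw [hx (uIoc_subset_uIcc hx_mem), mul_comm]
  rw [h_deriv] at h_ibp
  linarith

theorem integral_one_sub_sq_mul_eq (hf : IntervalIntegrable f volume a b) :
    ∫ x in a..b, (1 - x) ^ 2 * f x
      = (∫ x in a..b, f x) - 2 * (∫ x in a..b, x * f x) + ∫ x in a..b, x ^ 2 * f x := by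
  have h_id : IntervalIntegrable (fun x => x * f x) volume a b :=
    hf.continuousOn_mul continuousOn_id
  have h_sq : IntervalIntegrable (fun x => x ^ 2 * f x) volume a b :=
    hf.continuousOn_mul (continuousOn_pow 2)
  rw [← intervalIntegral.integral_const_mul,
    ← intervalIntegral.integral_sub hf (h_id.const_mul 2),
    ← intervalIntegral.integral_add (hf.sub (h_id.const_mul 2)) h_sq]
  exact intervalIntegral.integral_congr fun x _ => by ring

variable {f₀ f₁ : ℝ → ℝ} {c₀ c₁ : ℝ}

theorem ae_mul_add_mul_eq_one_of_forall_intervalIntegral_eq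
    (hf₀ : IntervalIntegrable f₀ volume a b) (hf₁ : IntervalIntegrable f₁ volume a b)
    (h : ∀ t ∈ uIcc a b, c₀ * (∫ x in a..t, f₀ x) + c₁ * (∫ x in a..t, f₁ x) = t - a) :
    ∀ᵐ x, x ∈ uIoc a b → c₀ * f₀ x + c₁ * f₁ x = 1 := by
  refine ((hf₀.const_mul c₀).add (hf₁.const_mul c₁)).ae_eq_of_forall_intervalIntegral_eq
    intervalIntegrable_const fun t ht => ?_
  have h_sub : uIcc a t ⊆ uIcc a b := uIcc_subset_uIcc_left ht
  rw [intervalIntegral.integral_add ((hf₀.mono_set h_sub).const_mul c₀)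
    ((hf₁.mono_set h_sub).const_mul c₁), intervalIntegral.integral_const_mul,
    intervalIntegral.integral_const_mul, h t ht]
  simp

theorem mul_integral_mul_add_mul_integral_mul_eq (hf₀ : IntervalIntegrable f₀ volume a b)
    (hf₁ : IntervalIntegrable f₁ volume a b) (hg : ContinuousOn g (uIcc a b))
    (h : ∀ᵐ x, x ∈ uIoc a b → c₀ * f₀ x + c₁ * f₁ x = 1) :
    c₀ * (∫ x in a..b, g x * f₀ x) + c₁ * (∫ x in a..b, g x * f₁ x) = ∫ x in a..b, g x := by
  rw [← intervalIntegral.integral_const_mul, ← intervalIntegral.integral_const_mul,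
    ← intervalIntegral.integral_add ((hf₀.continuousOn_mul hg).const_mul c₀)
      ((hf₁.continuousOn_mul hg).const_mul c₁)]
  refine intervalIntegral.integral_congr_ae ?_
  filter_upwards [h] with x hx hx_mem
  linear_combination g x * hx hx_mem

end IntervalIntegrable

theorem evenly_spaced_brier_eq_auc_general
    (π0 π1 : ℝ) (hπ : π0 + π1 = 1)
    (f0 f1 F0 F1 : ℝ → ℝ)
    (hF0 : ∀ t, F0 t = ∫ s in (0:ℝ)..t, f0 s)
    (hF1 : ∀ t, F1 t = ∫ s in (0:ℝ)..t, f1 s)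
    (hf0int : IntervalIntegrable f0 volume 0 1)
    (hf1int : IntervalIntegrable f1 volume 0 1)
    (hF01 : F0 1 = 1)
    (hR : ∀ t ∈ Set.Icc (0:ℝ) 1, π0 * F0 t + π1 * F1 t = t) :
    π0 * (∫ s in (0:ℝ)..1, s ^ 2 * f0 s) + π1 * (∫ s in (0:ℝ)..1, (1 - s) ^ 2 * f1 s)
      = π0 * π1 * (1 - 2 * ∫ s in (0:ℝ)..1, F0 s * f1 s) + 1 / 3 := by
  obtain rfl : F0 = fun t => ∫ s in (0:ℝ)..t, f0 s := funext hF0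
  obtain rfl : F1 = fun t => ∫ s in (0:ℝ)..t, f1 s := funext hF1
  have h_density : ∀ᵐ s, s ∈ uIoc 0 1 → π0 * f0 s + π1 * f1 s = 1 :=
    hf0int.ae_mul_add_mul_eq_one_of_forall_intervalIntegral_eq hf1int fun t ht => by
      rw [sub_zero, hR t (by rwa [uIcc_of_le zero_le_one] at ht)]
  have h_sq : π0 * (∫ s in (0:ℝ)..1, (1 - s) ^ 2 * f0 s)
      + π1 * (∫ s in (0:ℝ)..1, (1 - s) ^ 2 * f1 s) = 1 / 3 := by
    rw [hf0int.mul_integral_mul_add_mul_integral_mul_eq hf1int (by fun_prop) h_density,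
      intervalIntegral.integral_comp_sub_left (fun s => s ^ 2)]
    norm_num
  have h_auc := hf0int.mul_integral_mul_add_mul_integral_mul_eq hf1int
    (intervalIntegral.continuousOn_primitive_interval' hf0int left_mem_uIcc) h_density
  have h_half := hf0int.integral_intervalIntegral_mul_eq
  have h_mean := hf0int.integral_id_mul_eq
  have h_expand := hf0int.integral_one_sub_sq_mul_eq
  simp only at hF01
  rw [hF01] at h_half h_mean h_expand
  linear_combination h_sq - π0 * h_expand + 2 * π0 * h_mean + 2 * π0 * h_auc
    - 2 * π0 ^ 2 * h_half - π0 * hπ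

/-- If scores are evenly-spaced (`R(t) = t` on `[0,1]`), the Brier score equals
    `π₀π₁(1 - 2 AUC) + 1/3`. -/
theorem evenly_spaced_brier_eq_auc
    (π0 π1 : ℝ) (hπ0 : 0 ≤ π0) (hπ1 : 0 ≤ π1) (hπ : π0 + π1 = 1)
    (f0 f1 F0 F1 : ℝ → ℝ)
    (hf0 : ∀ s, 0 ≤ f0 s) (hf1 : ∀ s, 0 ≤ f1 s)
    (hF0 : ∀ t, F0 t = ∫ s in (0:ℝ)..t, f0 s)
    (hF1 : ∀ t, F1 t = ∫ s in (0:ℝ)..t, f1 s)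
    (hf0int : IntervalIntegrable f0 volume 0 1)
    (hf1int : IntervalIntegrable f1 volume 0 1)
    (hF00 : F0 0 = 0) (hF10 : F1 0 = 0) (hF01 : F0 1 = 1) (hF11 : F1 1 = 1)
    (hR : ∀ t ∈ Set.Icc (0:ℝ) 1, π0 * F0 t + π1 * F1 t = t) :
    π0 * (∫ s in (0:ℝ)..1, s ^ 2 * f0 s) + π1 * (∫ s in (0:ℝ)..1, (1 - s) ^ 2 * f1 s)
      = π0 * π1 * (1 - 2 * ∫ s in (0:ℝ)..1, F0 s * f1 s) + 1 / 3 :=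
  evenly_spaced_brier_eq_auc_general π0 π1 hπ f0 f1 F0 F1 hF0 hF1 hf0int hf1int hF01 hR
end

section
/- If scores are evenly-spaced (R(t) = t on [0,1]) then the mean absolute error equals π₀π₁(1 − 2·AUC) + 1/2. -/
/-!
The cdfs are absolutely continuous, so integration by parts gives `∫ F₀ f₁ + ∫ F₁ f₀ = 1` and
`∫ Fᵢ fᵢ = 1/2`. Evenly spaced scores let one write the score `s` itself as
`π₀ F₀(s) + π₁ F₁(s)`, so each first moment `∫ s fᵢ` is a combination of these four integrals,
that is, of `1/2` and the AUC.
-/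

open MeasureTheory Set intervalIntegral
open scoped Interval

section Primitive

variable {f g F G : ℝ → ℝ} {a b : ℝ}

theorem absolutelyContinuousOnInterval_of_eq_primitive (hf : IntervalIntegrable f volume a b)
    (hF : ∀ t, F t = ∫ s in a..t, f s) : AbsolutelyContinuousOnInterval F a b := by
  rw [funext hF]
  exact hf.absolutelyContinuousOnInterval_intervalIntegral left_mem_uIcc

theorem ae_deriv_eq_of_eq_primitive (hf : IntervalIntegrable f volume a b)
    (hF : ∀ t, F t = ∫ s in a..t, f s) : ∀ᵐ x, x ∈ Ι a b → deriv F x = f x := by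
  rw [funext hF]
  filter_upwards [hf.ae_hasDerivAt_integral] with x hx hxab
  exact (hx (uIoc_subset_uIcc hxab) a left_mem_uIcc).deriv

theorem integral_mul_add_integral_mul_eq_of_eq_primitive (hf : IntervalIntegrable f volume a b)
    (hg : IntervalIntegrable g volume a b) (hF : ∀ t, F t = ∫ s in a..t, f s)
    (hG : ∀ t, G t = ∫ s in a..t, g s) :
    (∫ x in a..b, F x * g x) + ∫ x in a..b, G x * f x = F b * G b := by
  have hFac := absolutelyContinuousOnInterval_of_eq_primitive hf hF
  have hGac := absolutelyContinuousOnInterval_of_eq_primitive hg hG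
  have hFa : F a = 0 := by simp [hF]
  rw [← integral_add (hg.continuousOn_mul hFac.continuousOn)
      (hf.continuousOn_mul hGac.continuousOn),
    ← sub_zero (F b * G b), ← zero_mul (G a), ← hFa, ← hFac.integral_deriv_mul_eq_sub hGac]
  refine integral_congr_ae ?_
  filter_upwards [ae_deriv_eq_of_eq_primitive hf hF, ae_deriv_eq_of_eq_primitive hg hG]
    with x hFx hGx hx
  rw [hFx hx, hGx hx]
  ring

end Primitive

theorem integral_self_mul_eq_of_combination_eq_id {F₀ F₁ h : ℝ → ℝ} {c₀ c₁ a b : ℝ}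
    (hR : ∀ t ∈ [[a, b]], c₀ * F₀ t + c₁ * F₁ t = t) (hh : IntervalIntegrable h volume a b)
    (hF₀ : ContinuousOn F₀ [[a, b]]) (hF₁ : ContinuousOn F₁ [[a, b]]) :
    ∫ x in a..b, x * h x
      = c₀ * (∫ x in a..b, F₀ x * h x) + c₁ * ∫ x in a..b, F₁ x * h x := by
  rw [← intervalIntegral.integral_const_mul, ← intervalIntegral.integral_const_mul,
    ← integral_add ((hh.continuousOn_mul hF₀).const_mul c₀)
      ((hh.continuousOn_mul hF₁).const_mul c₁)]
  refine integral_congr fun x hx => ?_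
  linear_combination -h x * hR x hx

theorem evenly_spaced_mae_eq_auc_general
    (π0 π1 : ℝ) (hπ : π0 + π1 = 1)
    (f0 f1 F0 F1 : ℝ → ℝ)
    (hF0 : ∀ t, F0 t = ∫ s in (0:ℝ)..t, f0 s)
    (hF1 : ∀ t, F1 t = ∫ s in (0:ℝ)..t, f1 s)
    (hf0int : IntervalIntegrable f0 volume 0 1)
    (hf1int : IntervalIntegrable f1 volume 0 1)
    (hF01 : F0 1 = 1) (hF11 : F1 1 = 1)
    (hR : ∀ t ∈ Set.Icc (0:ℝ) 1, π0 * F0 t + π1 * F1 t = t) :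
    π0 * (∫ s in (0:ℝ)..1, s * f0 s) + π1 * (∫ s in (0:ℝ)..1, (1 - s) * f1 s)
      = π0 * π1 * (1 - 2 * ∫ s in (0:ℝ)..1, F0 s * f1 s) + 1 / 2 := by
  have parts₀₀ := integral_mul_add_integral_mul_eq_of_eq_primitive hf0int hf0int hF0 hF0
  have parts₁₁ := integral_mul_add_integral_mul_eq_of_eq_primitive hf1int hf1int hF1 hF1
  have parts₀₁ := integral_mul_add_integral_mul_eq_of_eq_primitive hf0int hf1int hF0 hF1
  have hR' : ∀ t ∈ [[(0:ℝ), 1]], π0 * F0 t + π1 * F1 t = t := by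
    rwa [uIcc_of_le zero_le_one]
  have cF0 := (absolutelyContinuousOnInterval_of_eq_primitive hf0int hF0).continuousOn
  have cF1 := (absolutelyContinuousOnInterval_of_eq_primitive hf1int hF1).continuousOn
  have moment₀ := integral_self_mul_eq_of_combination_eq_id hR' hf0int cF0 cF1
  have moment₁ := integral_self_mul_eq_of_combination_eq_id hR' hf1int cF0 cF1
  have mass₁ : ∫ s in (0:ℝ)..1, f1 s = 1 := (hF1 1).symm.trans hF11
  have reflect₁ : ∫ s in (0:ℝ)..1, (1 - s) * f1 s
      = (∫ s in (0:ℝ)..1, f1 s) - ∫ s in (0:ℝ)..1, s * f1 s := by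
    rw [← integral_sub hf1int (hf1int.continuousOn_mul (continuousOn_id' _))]
    exact integral_congr fun s _ => by ring
  rw [hF01] at parts₀₀ parts₀₁
  rw [hF11] at parts₁₁ parts₀₁
  rw [reflect₁, mass₁, moment₀, moment₁]
  linear_combination (π0 * π0 / 2) * parts₀₀ - (π1 * π1 / 2) * parts₁₁
    + π0 * π1 * parts₀₁ + ((π0 - π1 + 1) / 2) * hπ

/-- If scores are evenly-spaced (`R(t) = t` on `[0,1]`), the mean absolute error equals
    `π₀π₁(1 - 2 AUC) + 1/2`. -/
theorem evenly_spaced_mae_eq_auc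
    (π0 π1 : ℝ) (hπ0 : 0 ≤ π0) (hπ1 : 0 ≤ π1) (hπ : π0 + π1 = 1)
    (f0 f1 F0 F1 : ℝ → ℝ)
    (hf0 : ∀ s, 0 ≤ f0 s) (hf1 : ∀ s, 0 ≤ f1 s)
    (hF0 : ∀ t, F0 t = ∫ s in (0:ℝ)..t, f0 s)
    (hF1 : ∀ t, F1 t = ∫ s in (0:ℝ)..t, f1 s)
    (hf0int : IntervalIntegrable f0 volume 0 1)
    (hf1int : IntervalIntegrable f1 volume 0 1)
    (hF00 : F0 0 = 0) (hF10 : F1 0 = 0) (hF01 : F0 1 = 1) (hF11 : F1 1 = 1)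
    (hR : ∀ t ∈ Set.Icc (0:ℝ) 1, π0 * F0 t + π1 * F1 t = t) :
    π0 * (∫ s in (0:ℝ)..1, s * f0 s) + π1 * (∫ s in (0:ℝ)..1, (1 - s) * f1 s)
      = π0 * π1 * (1 - 2 * ∫ s in (0:ℝ)..1, F0 s * f1 s) + 1 / 2 :=
  evenly_spaced_mae_eq_auc_general π0 π1 hπ f0 f1 F0 F1 hF0 hF1 hf0int hf1int hF01 hF11 hR
end
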